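/- arXiv:1411.7538 — 6 statements merged into one kernel-verified Lean document; each statement's English description precedes it below -/
import Mathlib

section
/- Let a, b, c be negative real numbers and z > 0. Then G(a,b;z) · G(c;z) = G(a,b,c;z) + G(a,c,b;z) + G(c,a,b;z), where each G is the iterated integral G(a₁,a₂;z) = ∫₀^z (1/(t₁−a₁)) ∫₀^{t₁} (1/(t₂−a₂)) dt₂ dt₁ and G(a₁,a₂,a₃;z) = ∫₀^z (1/(t₁−a₁)) ∫₀^{t₁} (1/(t₂−a₂)) ∫₀^{t₂} (1/(t₃−a₃)) dt₃ dt₂ dt₁, and G(c;z) = ∫₀^z dt/(t−c). -/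
open intervalIntegral Set MeasureTheory

/-- FTC helper: derivative of `u ↦ ∫₀ᵘ f` at points of `Ioi m` when `f` is continuous there. -/
lemma ftc_Ioi {m : ℝ} (hm : m < 0) {f : ℝ → ℝ} (hf : ContinuousOn f (Ioi m))
    {t : ℝ} (ht : t ∈ Ioi m) :
    HasDerivAt (fun u => ∫ s in (0:ℝ)..u, f s) (f t) t := by
  have h0 : (0:ℝ) ∈ Ioi m := hm
  have hsub : Set.uIcc (0:ℝ) t ⊆ Ioi m := (ordConnected_Ioi).uIcc_subset h0 ht
  have hint : IntervalIntegrable f volume 0 t :=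
    (hf.mono hsub).intervalIntegrable
  have hct : ContinuousAt f t := hf.continuousAt (isOpen_Ioi.mem_nhds ht)
  exact intervalIntegral.integral_hasDerivAt_right hint
    (hf.stronglyMeasurableAtFilter isOpen_Ioi t ht) hct

lemma cont_Ioi {m : ℝ} (hm : m < 0) {f : ℝ → ℝ} (hf : ContinuousOn f (Ioi m)) :
    ContinuousOn (fun u => ∫ s in (0:ℝ)..u, f s) (Ioi m) := fun t ht =>
  ((ftc_Ioi hm hf ht).continuousAt).continuousWithinAt

/-- Shuffle relation for a weight-two times a weight-one multiple polylogarithm: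
for `a, b, c < 0` and `z > 0`, `G(a,b;z) · G(c;z) = G(a,b,c;z) + G(a,c,b;z) + G(c,a,b;z)`,
with all `G`'s written as explicit iterated integrals. -/
theorem shuffle_weight_two_one (a b c z : ℝ) (ha : a < 0) (hb : b < 0) (hc : c < 0)
    (hz : 0 < z) :
    (∫ t₁ in (0 : ℝ)..z, (1 / (t₁ - a)) * ∫ t₂ in (0 : ℝ)..t₁, 1 / (t₂ - b)) *
        (∫ t in (0 : ℝ)..z, 1 / (t - c)) =
      (∫ t₁ in (0 : ℝ)..z, (1 / (t₁ - a)) *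
        ∫ t₂ in (0 : ℝ)..t₁, (1 / (t₂ - b)) * ∫ t₃ in (0 : ℝ)..t₂, 1 / (t₃ - c))
      + (∫ t₁ in (0 : ℝ)..z, (1 / (t₁ - a)) *
        ∫ t₂ in (0 : ℝ)..t₁, (1 / (t₂ - c)) * ∫ t₃ in (0 : ℝ)..t₂, 1 / (t₃ - b))
      + ∫ t₁ in (0 : ℝ)..z, (1 / (t₁ - c)) *
        ∫ t₂ in (0 : ℝ)..t₁, (1 / (t₂ - a)) * ∫ t₃ in (0 : ℝ)..t₂, 1 / (t₃ - b) := by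
  set m : ℝ := max a (max b c) with hmdef
  have hm : m < 0 := by simp [hmdef, ha, hb, hc]
  have hma : a ≤ m := le_max_left _ _
  have hmb : b ≤ m := le_trans (le_max_left _ _) (le_max_right _ _)
  have hmc : c ≤ m := le_trans (le_max_right _ _) (le_max_right _ _)
  -- basic integrand continuity
  have hcx : ∀ x : ℝ, x ≤ m → ContinuousOn (fun s : ℝ => 1 / (s - x)) (Ioi m) := by
    intro x hx
    apply ContinuousOn.div continuousOn_const (by fun_prop)
    intro s hs
    have : x < s := lt_of_le_of_lt hx hs
    linarith
  have hca := hcx a hma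
  have hcb := hcx b hmb
  have hcc := hcx c hmc
  -- the basic one-variable functions
  set B : ℝ → ℝ := fun u => ∫ s in (0:ℝ)..u, 1 / (s - b) with hB
  set C : ℝ → ℝ := fun u => ∫ s in (0:ℝ)..u, 1 / (s - c) with hC
  have hBc : ContinuousOn B (Ioi m) := cont_Ioi hm hcb
  have hCc : ContinuousOn C (Ioi m) := cont_Ioi hm hcc
  have hBd : ∀ t ∈ Ioi m, HasDerivAt B (1 / (t - b)) t := fun t ht => ftc_Ioi hm hcb ht
  have hCd : ∀ t ∈ Ioi m, HasDerivAt C (1 / (t - c)) t := fun t ht => ftc_Ioi hm hcc ht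
  set D : ℝ → ℝ := fun u => ∫ s in (0:ℝ)..u, (1 / (s - b)) * C s with hD
  set E : ℝ → ℝ := fun u => ∫ s in (0:ℝ)..u, (1 / (s - c)) * B s with hE
  set A : ℝ → ℝ := fun u => ∫ s in (0:ℝ)..u, (1 / (s - a)) * B s with hA
  have hDic : ContinuousOn (fun s : ℝ => (1 / (s - b)) * C s) (Ioi m) := hcb.mul hCc
  have hEic : ContinuousOn (fun s : ℝ => (1 / (s - c)) * B s) (Ioi m) := hcc.mul hBc
  have hAic : ContinuousOn (fun s : ℝ => (1 / (s - a)) * B s) (Ioi m) := hca.mul hBc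
  have hDc : ContinuousOn D (Ioi m) := cont_Ioi hm hDic
  have hEc : ContinuousOn E (Ioi m) := cont_Ioi hm hEic
  have hAc : ContinuousOn A (Ioi m) := cont_Ioi hm hAic
  have hDd : ∀ t ∈ Ioi m, HasDerivAt D ((1 / (t - b)) * C t) t := fun t ht => ftc_Ioi hm hDic ht
  have hEd : ∀ t ∈ Ioi m, HasDerivAt E ((1 / (t - c)) * B t) t := fun t ht => ftc_Ioi hm hEic ht
  have hAd : ∀ t ∈ Ioi m, HasDerivAt A ((1 / (t - a)) * B t) t := fun t ht => ftc_Ioi hm hAic ht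
  have h0m : (0:ℝ) ∈ Ioi m := hm
  -- weight-one shuffle: B t * C t = D t + E t on Ioi m
  have shuffle1 : ∀ t ∈ Ioi m, B t * C t = D t + E t := by
    intro t ht
    have key : ∀ u ∈ Set.uIcc (0:ℝ) t,
        HasDerivAt (fun v => B v * C v - D v - E v) 0 u := by
      intro u hu
      have hum : u ∈ Ioi m := (ordConnected_Ioi).uIcc_subset h0m ht hu
      have h1 := ((hBd u hum).mul (hCd u hum)).sub (hDd u hum)
      have h2 := h1.sub (hEd u hum)
      exact h2.congr_deriv (by ring)
    have hint : IntervalIntegrable (fun _ : ℝ => (0:ℝ)) volume 0 t :=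
      intervalIntegrable_const
    have := intervalIntegral.integral_eq_sub_of_hasDerivAt key hint
    simp only [intervalIntegral.integral_zero] at this
    have h0 : B 0 * C 0 - D 0 - E 0 = 0 := by
      simp [hB, hC, hD, hE, intervalIntegral.integral_same]
    have ht0 : B t * C t - D t - E t = 0 := by linarith [this]
    linarith
  -- main derivative argument
  have hzIoi : z ∈ Ioi m := lt_trans hm hz
  have key : ∀ u ∈ Set.uIcc (0:ℝ) z,
      HasDerivAt (fun v => A v * C v
          - (∫ s in (0:ℝ)..v, (1 / (s - a)) * D s)
          - (∫ s in (0:ℝ)..v, (1 / (s - a)) * E s)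
          - (∫ s in (0:ℝ)..v, (1 / (s - c)) * A s)) 0 u := by
    intro u hu
    have hum : u ∈ Ioi m := (ordConnected_Ioi).uIcc_subset h0m hzIoi hu
    have hG1 : HasDerivAt (fun v => ∫ s in (0:ℝ)..v, (1 / (s - a)) * D s)
        ((1 / (u - a)) * D u) u := ftc_Ioi hm (hca.mul hDc) hum
    have hG2 : HasDerivAt (fun v => ∫ s in (0:ℝ)..v, (1 / (s - a)) * E s)
        ((1 / (u - a)) * E u) u := ftc_Ioi hm (hca.mul hEc) hum
    have hG3 : HasDerivAt (fun v => ∫ s in (0:ℝ)..v, (1 / (s - c)) * A s)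
        ((1 / (u - c)) * A u) u := ftc_Ioi hm (hcc.mul hAc) hum
    have h1 := (((hAd u hum).mul (hCd u hum)).sub hG1).sub hG2
    have h2 := h1.sub hG3
    exact h2.congr_deriv (by linear_combination (1 / (u - a)) * shuffle1 u hum)
  have hint : IntervalIntegrable (fun _ : ℝ => (0:ℝ)) volume 0 z :=
    intervalIntegrable_const
  have hfin := intervalIntegral.integral_eq_sub_of_hasDerivAt key hint
  simp only [intervalIntegral.integral_zero] at hfin
  have h0 : A 0 * C 0 - (∫ s in (0:ℝ)..0, (1 / (s - a)) * D s)
      - (∫ s in (0:ℝ)..0, (1 / (s - a)) * E s)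
      - (∫ s in (0:ℝ)..0, (1 / (s - c)) * A s) = 0 := by
    simp [hA, hC, intervalIntegral.integral_same]
  have hmain : A z * C z = (∫ s in (0:ℝ)..z, (1 / (s - a)) * D s)
      + (∫ s in (0:ℝ)..z, (1 / (s - a)) * E s)
      + (∫ s in (0:ℝ)..z, (1 / (s - c)) * A s) := by linarith [hfin]
  exact hmain
end

section
/- Let z₁, z₂ be complex numbers with |z₁| < 1 and |z₂| < 1. Then (∑_{n≥1} z₁^n/n) · (∑_{n≥1} z₂^n/n) = ∑_{0<n₁<n₂} z₁^{n₁} z₂^{n₂}/(n₁ n₂) + ∑_{0<n₁<n₂} z₂^{n₁} z₁^{n₂}/(n₁ n₂) + ∑_{n≥1} (z₁ z₂)^n/n², where all series converge absolutely. -/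
private lemma aux_summable (z : ℂ) (hz : ‖z‖ < 1) (c : ℕ → ℂ)
    (hc : ∀ n, 1 ≤ ‖c n‖) : Summable (fun n : ℕ => z ^ (n + 1) / c n) := by
  apply Summable.of_norm
  apply Summable.of_nonneg_of_le (fun n => norm_nonneg _) _
    (summable_geometric_of_lt_one (norm_nonneg z) hz)
  intro n
  rw [norm_div]
  have h1 : ‖z ^ (n + 1)‖ / ‖c n‖ ≤ ‖z ^ (n + 1)‖ := by
    apply div_le_self (norm_nonneg _) (hc n)
  refine h1.trans ?_
  rw [norm_pow, pow_succ]
  have : ‖z‖ ≤ 1 := hz.le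
  calc ‖z‖ ^ n * ‖z‖ ≤ ‖z‖ ^ n * 1 := by
        exact mul_le_mul_of_nonneg_left this (pow_nonneg (norm_nonneg _) n)
    _ = ‖z‖ ^ n := by simp

private lemma one_le_norm_succ (n : ℕ) : 1 ≤ ‖((n : ℂ) + 1)‖ := by
  have : ((n : ℂ) + 1) = ((n + 1 : ℕ) : ℂ) := by push_cast; ring
  rw [this, Complex.norm_natCast]
  exact_mod_cast Nat.succ_le_succ (Nat.zero_le n)

private def eLT : {p : ℕ × ℕ // p ∈ {p : ℕ × ℕ | p.1 < p.2}} ≃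
    {p : ℕ × ℕ // 0 < p.1 ∧ p.1 < p.2} where
  toFun q := ⟨(q.1.1 + 1, q.1.2 + 1), by
    have h := q.2
    simp only [Set.mem_setOf_eq] at h
    exact ⟨Nat.succ_pos _, by omega⟩⟩
  invFun p := ⟨(p.1.1 - 1, p.1.2 - 1), by
    have h1 := p.2.1
    have h2 := p.2.2
    show p.1.1 - 1 < p.1.2 - 1
    omega⟩
  left_inv q := by
    have h := q.2
    simp only [Set.mem_setOf_eq] at h
    apply Subtype.ext
    apply Prod.ext <;> simp
  right_inv p := by
    have h1 := p.2.1
    have h2 := p.2.2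
    apply Subtype.ext
    apply Prod.ext <;> (show _ = _) <;> dsimp <;> omega

private def eGT : {p : ℕ × ℕ // p ∈ {p : ℕ × ℕ | p.2 < p.1}} ≃
    {p : ℕ × ℕ // 0 < p.1 ∧ p.1 < p.2} where
  toFun q := ⟨(q.1.2 + 1, q.1.1 + 1), by
    have h := q.2
    simp only [Set.mem_setOf_eq] at h
    exact ⟨Nat.succ_pos _, by omega⟩⟩
  invFun p := ⟨(p.1.2 - 1, p.1.1 - 1), by
    have h1 := p.2.1
    have h2 := p.2.2
    show p.1.1 - 1 < p.1.2 - 1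
    omega⟩
  left_inv q := by
    have h := q.2
    simp only [Set.mem_setOf_eq] at h
    apply Subtype.ext
    apply Prod.ext <;> simp
  right_inv p := by
    have h1 := p.2.1
    have h2 := p.2.2
    apply Subtype.ext
    apply Prod.ext <;> (show _ = _) <;> dsimp <;> omega

private def eDiag : ℕ ≃ {p : ℕ × ℕ // p ∈ {p : ℕ × ℕ | p.1 = p.2}} where
  toFun n := ⟨(n, n), rfl⟩
  invFun p := p.1.1
  left_inv n := rfl
  right_inv p := by
    obtain ⟨⟨a, b⟩, h⟩ := p
    simp only [Set.mem_setOf_eq] at h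
    simp [h]

/-- Stuffle relation `Li₁(z₁)·Li₁(z₂) = Li_{1,1}(z₁,z₂) + Li_{1,1}(z₂,z₁) + Li₂(z₁z₂)`
for `|z₁| < 1` and `|z₂| < 1`, where all series converge absolutely. -/
theorem stuffle_li_one (z₁ z₂ : ℂ) (h₁ : ‖z₁‖ < 1) (h₂ : ‖z₂‖ < 1) :
    Summable (fun n : ℕ => z₁ ^ (n + 1) / ((n : ℂ) + 1)) ∧
    Summable (fun n : ℕ => z₂ ^ (n + 1) / ((n : ℂ) + 1)) ∧
    Summable (fun p : {p : ℕ × ℕ // 0 < p.1 ∧ p.1 < p.2} =>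
      z₁ ^ p.1.1 * z₂ ^ p.1.2 / ((p.1.1 : ℂ) * (p.1.2 : ℂ))) ∧
    Summable (fun p : {p : ℕ × ℕ // 0 < p.1 ∧ p.1 < p.2} =>
      z₂ ^ p.1.1 * z₁ ^ p.1.2 / ((p.1.1 : ℂ) * (p.1.2 : ℂ))) ∧
    Summable (fun n : ℕ => (z₁ * z₂) ^ (n + 1) / ((n : ℂ) + 1) ^ 2) ∧
    (∑' n : ℕ, z₁ ^ (n + 1) / ((n : ℂ) + 1)) * (∑' n : ℕ, z₂ ^ (n + 1) / ((n : ℂ) + 1)) =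
      (∑' p : {p : ℕ × ℕ // 0 < p.1 ∧ p.1 < p.2},
        z₁ ^ p.1.1 * z₂ ^ p.1.2 / ((p.1.1 : ℂ) * (p.1.2 : ℂ)))
      + (∑' p : {p : ℕ × ℕ // 0 < p.1 ∧ p.1 < p.2},
        z₂ ^ p.1.1 * z₁ ^ p.1.2 / ((p.1.1 : ℂ) * (p.1.2 : ℂ)))
      + ∑' n : ℕ, (z₁ * z₂) ^ (n + 1) / ((n : ℂ) + 1) ^ 2 := by
  set f : ℕ → ℂ := fun n => z₁ ^ (n + 1) / ((n : ℂ) + 1) with hf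
  set g : ℕ → ℂ := fun n => z₂ ^ (n + 1) / ((n : ℂ) + 1) with hg
  have hsf : Summable f := aux_summable z₁ h₁ _ one_le_norm_succ
  have hsg : Summable g := aux_summable z₂ h₂ _ one_le_norm_succ
  have hnf : Summable (fun n => ‖f n‖) := by
    rw [← summable_norm_iff] at hsf; exact hsf
  have hng : Summable (fun n => ‖g n‖) := by
    rw [← summable_norm_iff] at hsg; exact hsg
  set F : ℕ × ℕ → ℂ := fun p => f p.1 * g p.2 with hF
  have hsF : Summable F := summable_mul_of_summable_norm hnf hng
  -- the three summabilities on subtypes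
  have key1 : ∀ q : {p : ℕ × ℕ // p ∈ {p : ℕ × ℕ | p.1 < p.2}},
      F q.1 = z₁ ^ (eLT q).1.1 * z₂ ^ (eLT q).1.2 / (((eLT q).1.1 : ℂ) * ((eLT q).1.2 : ℂ)) := by
    rintro ⟨⟨a, b⟩, h⟩
    simp only [hF, hf, hg, eLT, Equiv.coe_fn_mk]
    rw [div_mul_div_comm]
    push_cast
    ring
  have key2 : ∀ q : {p : ℕ × ℕ // p ∈ {p : ℕ × ℕ | p.2 < p.1}},
      F q.1 = z₂ ^ (eGT q).1.1 * z₁ ^ (eGT q).1.2 / (((eGT q).1.1 : ℂ) * ((eGT q).1.2 : ℂ)) := by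
    rintro ⟨⟨a, b⟩, h⟩
    simp only [hF, hf, hg, eGT, Equiv.coe_fn_mk]
    rw [div_mul_div_comm]
    push_cast
    ring
  have key3 : ∀ n : ℕ, F (eDiag n).1 = (z₁ * z₂) ^ (n + 1) / ((n : ℂ) + 1) ^ 2 := by
    intro n
    simp only [hF, hf, hg, eDiag, Equiv.coe_fn_mk]
    rw [div_mul_div_comm, mul_pow]
    ring
  have hsub1 : Summable (F ∘ ((↑) : {p : ℕ × ℕ // p ∈ {p : ℕ × ℕ | p.1 < p.2}} → ℕ × ℕ)) :=
    hsF.subtype _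
  have hsub2 : Summable (F ∘ ((↑) : {p : ℕ × ℕ // p ∈ {p : ℕ × ℕ | p.2 < p.1}} → ℕ × ℕ)) :=
    hsF.subtype _
  have hsub3 : Summable (F ∘ ((↑) : {p : ℕ × ℕ // p ∈ {p : ℕ × ℕ | p.1 = p.2}} → ℕ × ℕ)) :=
    hsF.subtype _
  have hS1 : Summable (fun p : {p : ℕ × ℕ // 0 < p.1 ∧ p.1 < p.2} =>
      z₁ ^ p.1.1 * z₂ ^ p.1.2 / ((p.1.1 : ℂ) * (p.1.2 : ℂ))) := by
    rw [← Equiv.summable_iff eLT]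
    exact hsub1.congr fun q => key1 q
  have hS2 : Summable (fun p : {p : ℕ × ℕ // 0 < p.1 ∧ p.1 < p.2} =>
      z₂ ^ p.1.1 * z₁ ^ p.1.2 / ((p.1.1 : ℂ) * (p.1.2 : ℂ))) := by
    rw [← Equiv.summable_iff eGT]
    exact hsub2.congr fun q => key2 q
  have hS3 : Summable (fun n : ℕ => (z₁ * z₂) ^ (n + 1) / ((n : ℂ) + 1) ^ 2) := by
    exact ((Equiv.summable_iff eDiag).mpr hsub3).congr key3
  refine ⟨hsf, hsg, hS1, hS2, hS3, ?_⟩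
  -- the product formula
  have hprod : (∑' n, f n) * (∑' n, g n) = ∑' p : ℕ × ℕ, F p :=
    tsum_mul_tsum_of_summable_norm hnf hng
  -- partition ℕ × ℕ
  have huniv : ({p : ℕ × ℕ | p.1 < p.2} ∪ {p : ℕ × ℕ | p.2 < p.1}) ∪ {p : ℕ × ℕ | p.1 = p.2}
      = Set.univ := by
    ext ⟨a, b⟩
    simp only [Set.mem_union, Set.mem_setOf_eq, Set.mem_univ, iff_true]
    omega
  have hd1 : Disjoint {p : ℕ × ℕ | p.1 < p.2} {p : ℕ × ℕ | p.2 < p.1} := by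
    rw [Set.disjoint_left]
    rintro ⟨a, b⟩ h1 h2
    simp only [Set.mem_setOf_eq] at h1 h2
    omega
  have hd2 : Disjoint ({p : ℕ × ℕ | p.1 < p.2} ∪ {p : ℕ × ℕ | p.2 < p.1})
      {p : ℕ × ℕ | p.1 = p.2} := by
    rw [Set.disjoint_left]
    rintro ⟨a, b⟩ h1 h2
    simp only [Set.mem_union, Set.mem_setOf_eq] at h1 h2
    omega
  have hsplit : ∑' p : ℕ × ℕ, F p
      = (∑' p : {p : ℕ × ℕ // p ∈ {p : ℕ × ℕ | p.1 < p.2}}, F p.1)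
      + (∑' p : {p : ℕ × ℕ // p ∈ {p : ℕ × ℕ | p.2 < p.1}}, F p.1)
      + (∑' p : {p : ℕ × ℕ // p ∈ {p : ℕ × ℕ | p.1 = p.2}}, F p.1) := by
    rw [← tsum_univ F, ← huniv,
      Summable.tsum_union_disjoint hd2 ((hsF.subtype _)) hsub3,
      Summable.tsum_union_disjoint hd1 hsub1 hsub2]
  have e1 : (∑' p : {p : ℕ × ℕ // p ∈ {p : ℕ × ℕ | p.1 < p.2}}, F p.1)
      = ∑' p : {p : ℕ × ℕ // 0 < p.1 ∧ p.1 < p.2},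
        z₁ ^ p.1.1 * z₂ ^ p.1.2 / ((p.1.1 : ℂ) * (p.1.2 : ℂ)) := by
    rw [← Equiv.tsum_eq eLT]
    exact tsum_congr key1
  have e2 : (∑' p : {p : ℕ × ℕ // p ∈ {p : ℕ × ℕ | p.2 < p.1}}, F p.1)
      = ∑' p : {p : ℕ × ℕ // 0 < p.1 ∧ p.1 < p.2},
        z₂ ^ p.1.1 * z₁ ^ p.1.2 / ((p.1.1 : ℂ) * (p.1.2 : ℂ)) := by
    rw [← Equiv.tsum_eq eGT]
    exact tsum_congr key2
  have e3 : (∑' p : {p : ℕ × ℕ // p ∈ {p : ℕ × ℕ | p.1 = p.2}}, F p.1)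
      = ∑' n : ℕ, (z₁ * z₂) ^ (n + 1) / ((n : ℂ) + 1) ^ 2 := by
    rw [← Equiv.tsum_eq eDiag]
    exact tsum_congr key3
  rw [hprod, hsplit, e1, e2, e3]
end

section
/- The weight-three multiple zeta value ζ_{2,1} equals ζ₃; that is, ∑_{n₁>n₂≥1} 1/(n₁² n₂) = ∑_{n≥1} 1/n³. -/
set_option maxHeartbeats 1000000

open Filter Finset Real

/-- The single zeta value `ζ_a = ∑_{n ≥ 1} 1 / n^a`. -/
noncomputable def mzv1 (a : ℕ) : ℝ :=
  ∑' n : ℕ, (1 : ℝ) / ((n : ℝ) + 1) ^ a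

/-- The depth-two multiple zeta value `ζ_{a,b} = ∑_{n₁ > n₂ ≥ 1} 1 / (n₁^a n₂^b)`. -/
noncomputable def mzv2 (a b : ℕ) : ℝ :=
  ∑' p : {p : ℕ × ℕ // 1 ≤ p.2 ∧ p.2 < p.1},
    (1 : ℝ) / ((p.1.1 : ℝ) ^ a * (p.1.2 : ℝ) ^ b)

/-- The depth-three multiple zeta value
`ζ_{a,b,c} = ∑_{n₁ > n₂ > n₃ ≥ 1} 1 / (n₁^a n₂^b n₃^c)`. -/
noncomputable def mzv3 (a b c : ℕ) : ℝ :=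
  ∑' t : {t : ℕ × ℕ × ℕ // 1 ≤ t.2.2 ∧ t.2.2 < t.2.1 ∧ t.2.1 < t.1},
    (1 : ℝ) / ((t.1.1 : ℝ) ^ a * (t.1.2.1 : ℝ) ^ b * (t.1.2.2 : ℝ) ^ c)

namespace Zeta21Aux

/-- The master function `F (d,j) = 1/((d+1)(j+1)(d+j+2))`. -/
noncomputable def F : ℕ × ℕ → ℝ :=
  fun p => 1 / (((p.1 : ℝ) + 1) * ((p.2 : ℝ) + 1) * ((p.1 : ℝ) + (p.2 : ℝ) + 2))

/-- `T (d,j) = 1/((d+j+2)^2 (j+1))`, whose total sum is `ζ_{2,1}`. -/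
noncomputable def T : ℕ × ℕ → ℝ :=
  fun p => 1 / ((((p.1 : ℝ) + (p.2 : ℝ) + 2)) ^ 2 * ((p.2 : ℝ) + 1))

lemma F_nonneg (p : ℕ × ℕ) : 0 ≤ F p := by
  unfold F; positivity

lemma T_nonneg (p : ℕ × ℕ) : 0 ≤ T p := by
  unfold T; positivity

lemma summable_p32 : Summable (fun n : ℕ => 1 / ((n : ℝ) + 1) ^ (3/2 : ℝ)) := by
  have h : Summable (fun n : ℕ => 1 / (n : ℝ) ^ (3/2 : ℝ)) :=
    Real.summable_one_div_nat_rpow.mpr (by norm_num)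
  have := (summable_nat_add_iff 1).mpr h
  simpa using this

lemma F_le (d j : ℕ) :
    F (d, j) ≤ 1 / ((d : ℝ) + 1) ^ (3/2 : ℝ) * (1 / ((j : ℝ) + 1) ^ (3/2 : ℝ)) := by
  have hx : (0:ℝ) < (d:ℝ) + 1 := by positivity
  have hy : (0:ℝ) < (j:ℝ) + 1 := by positivity
  have hxy : (0:ℝ) < ((d:ℝ) + 1) * ((j:ℝ) + 1) := by positivity
  have hsq : Real.sqrt (((d:ℝ) + 1) * ((j:ℝ) + 1)) ≤ (d:ℝ) + (j:ℝ) + 2 := by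
    rw [show (d:ℝ) + (j:ℝ) + 2 = Real.sqrt (((d:ℝ) + (j:ℝ) + 2) ^ 2) from
      (Real.sqrt_sq (by positivity)).symm]
    apply Real.sqrt_le_sqrt
    nlinarith [Nat.cast_nonneg (α := ℝ) d, Nat.cast_nonneg (α := ℝ) j]
  have key : (((d:ℝ) + 1) * ((j:ℝ) + 1)) ^ (3/2 : ℝ)
      ≤ ((d:ℝ) + 1) * ((j:ℝ) + 1) * ((d:ℝ) + (j:ℝ) + 2) := by
    rw [show (3/2 : ℝ) = 1 + 1/2 by norm_num, Real.rpow_add hxy, Real.rpow_one,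
      ← Real.sqrt_eq_rpow]
    exact mul_le_mul_of_nonneg_left hsq hxy.le
  have hrw : 1 / ((d : ℝ) + 1) ^ (3/2 : ℝ) * (1 / ((j : ℝ) + 1) ^ (3/2 : ℝ))
      = 1 / ((((d:ℝ) + 1) * ((j:ℝ) + 1)) ^ (3/2 : ℝ)) := by
    rw [Real.mul_rpow hx.le hy.le]; ring
  rw [hrw]
  exact one_div_le_one_div_of_le (Real.rpow_pos_of_pos hxy _) key

lemma summable_F : Summable F := by
  have hs : Summable (fun p : ℕ × ℕ =>
      (1 / ((p.1 : ℝ) + 1) ^ (3/2 : ℝ)) * (1 / ((p.2 : ℝ) + 1) ^ (3/2 : ℝ))) :=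
    summable_p32.mul_of_nonneg summable_p32 (fun n => by positivity) (fun n => by positivity)
  exact hs.of_nonneg_of_le F_nonneg (fun p => F_le p.1 p.2)

lemma T_le_F (p : ℕ × ℕ) : T p ≤ F p := by
  obtain ⟨d, j⟩ := p
  have hd : (0:ℝ) ≤ (d:ℝ) := Nat.cast_nonneg d
  have hj : (0:ℝ) ≤ (j:ℝ) := Nat.cast_nonneg j
  show 1 / (((d:ℝ) + (j:ℝ) + 2) ^ 2 * ((j:ℝ) + 1))
      ≤ 1 / (((d:ℝ) + 1) * ((j:ℝ) + 1) * ((d:ℝ) + (j:ℝ) + 2))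
  apply one_div_le_one_div_of_le
  · positivity
  · have expand : ((d:ℝ) + (j:ℝ) + 2) ^ 2 * ((j:ℝ) + 1)
        - ((d:ℝ) + 1) * ((j:ℝ) + 1) * ((d:ℝ) + (j:ℝ) + 2)
        = ((j:ℝ) + 1) * ((j:ℝ) + 1) * ((d:ℝ) + (j:ℝ) + 2) := by ring
    nlinarith [mul_nonneg (mul_nonneg (by linarith : (0:ℝ) ≤ (j:ℝ) + 1)
      (by linarith : (0:ℝ) ≤ (j:ℝ) + 1)) (by linarith : (0:ℝ) ≤ (d:ℝ) + (j:ℝ) + 2)]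

lemma summable_T : Summable T :=
  summable_F.of_nonneg_of_le T_nonneg T_le_F

/-- The equivalence `ℕ × ℕ ≃ {p : ℕ × ℕ // 1 ≤ p.2 ∧ p.2 < p.1}`, `(d, j) ↦ (d+j+2, j+1)`. -/
def eA : (ℕ × ℕ) ≃ {p : ℕ × ℕ // 1 ≤ p.2 ∧ p.2 < p.1} where
  toFun := fun q => ⟨(q.1 + q.2 + 2, q.2 + 1), by omega⟩
  invFun := fun p => (p.1.1 - p.1.2 - 1, p.1.2 - 1)
  left_inv := fun q => by
    obtain ⟨d, j⟩ := q
    simp only [Prod.mk.injEq]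
    omega
  right_inv := fun p => by
    obtain ⟨⟨a, b⟩, h1, h2⟩ := p
    simp only [Subtype.mk.injEq, Prod.mk.injEq]
    omega

lemma mzv2_eq_tsum_T : mzv2 2 1 = ∑' q : ℕ × ℕ, T q := by
  rw [mzv2, ← Equiv.tsum_eq eA]
  apply tsum_congr
  intro q
  obtain ⟨d, j⟩ := q
  simp only [eA, Equiv.coe_fn_mk, T, pow_one]
  push_cast
  ring_nf

/-- Partial fraction: `F p = T p + T p.swap`. -/
lemma F_eq (p : ℕ × ℕ) : F p = T p + T p.swap := by
  obtain ⟨d, j⟩ := p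
  unfold F T
  simp only [Prod.swap]
  have hd : ((d:ℝ) + 1) ≠ 0 := by positivity
  have hj : ((j:ℝ) + 1) ≠ 0 := by positivity
  have hs : ((d:ℝ) + (j:ℝ) + 2) ≠ 0 := by positivity
  field_simp
  ring

lemma summable_T_swap : Summable (fun p : ℕ × ℕ => T p.swap) :=
  (Equiv.prodComm ℕ ℕ).summable_iff.mpr summable_T

lemma tsum_F_eq_two_mul : ∑' p : ℕ × ℕ, F p = 2 * ∑' p : ℕ × ℕ, T p := by
  calc ∑' p : ℕ × ℕ, F p = ∑' p : ℕ × ℕ, (T p + T p.swap) := tsum_congr F_eq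
    _ = (∑' p : ℕ × ℕ, T p) + ∑' p : ℕ × ℕ, T p.swap :=
        Summable.tsum_add summable_T summable_T_swap
    _ = 2 * ∑' p : ℕ × ℕ, T p := by
        have h : ∑' p : ℕ × ℕ, T p.swap = ∑' p : ℕ × ℕ, T p :=
          (Equiv.prodComm ℕ ℕ).tsum_eq (f := T)
        rw [h]; ring

/-- Telescoping: if `f → 0` and the differences are summable then
`∑' n, (f n - f (n + k)) = ∑ j in range k, f j`. -/
lemma tsum_telescope (f : ℕ → ℝ) (k : ℕ) (hf : Tendsto f atTop (nhds 0))
    (hs : Summable fun n => f n - f (n + k)) :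
    ∑' n, (f n - f (n + k)) = ∑ j ∈ range k, f j := by
  have h1 : Tendsto (fun N => ∑ n ∈ range N, (f n - f (n + k))) atTop
      (nhds (∑' n, (f n - f (n + k)))) := hs.hasSum.tendsto_sum_nat
  have key : ∀ N, ∑ n ∈ range N, (f n - f (n + k)) =
      ∑ j ∈ range k, f j - ∑ i ∈ range k, f (N + i) := by
    intro N
    have hsplit1 : ∑ n ∈ range (N + k), f n
        = ∑ n ∈ range N, f n + ∑ i ∈ range k, f (N + i) := Finset.sum_range_add f N k
    have hsplit2 : ∑ n ∈ range (k + N), f n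
        = ∑ n ∈ range k, f n + ∑ i ∈ range N, f (k + i) := Finset.sum_range_add f k N
    have hc : ∑ n ∈ range N, f (n + k) = ∑ i ∈ range N, f (k + i) := by
      apply Finset.sum_congr rfl
      intro i _
      rw [Nat.add_comm]
    rw [Finset.sum_sub_distrib, hc]
    rw [show k + N = N + k from Nat.add_comm k N] at hsplit2
    linarith [hsplit1, hsplit2]
  have h2 : Tendsto (fun N => ∑ j ∈ range k, f j - ∑ i ∈ range k, f (N + i)) atTop
      (nhds (∑ j ∈ range k, f j - 0)) := by
    apply Tendsto.sub tendsto_const_nhds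
    have h3 : Tendsto (fun N => ∑ i ∈ range k, f (N + i)) atTop
        (nhds (∑ _i ∈ range k, (0:ℝ))) := by
      apply tendsto_finset_sum
      intro i _
      exact hf.comp (tendsto_add_atTop_nat i)
    simpa using h3
  have h1' : Tendsto (fun N => ∑ n ∈ range N, (f n - f (n + k))) atTop
      (nhds (∑ j ∈ range k, f j - 0)) := by
    simp only [key]; exact h2
  have h4 := tendsto_nhds_unique h1 h1'
  rw [h4]; ring

lemma recip_tendsto : Tendsto (fun n : ℕ => 1 / ((n : ℝ) + 1)) atTop (nhds 0) := by
  have : Tendsto (fun n : ℕ => 1 / ((n : ℝ) + 1)) atTop (nhds 0) :=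
    tendsto_one_div_add_atTop_nhds_zero_nat
  simpa using this

lemma diff_eq (m n : ℕ) :
    1 / ((n : ℝ) + 1) - 1 / (((n + (m + 1) : ℕ) : ℝ) + 1)
      = ((m : ℝ) + 1) * (1 / (((n : ℝ) + 1) * ((n : ℝ) + (m : ℝ) + 2))) := by
  have h1 : ((n:ℝ) + 1) ≠ 0 := by positivity
  have h2 : ((n:ℝ) + (m:ℝ) + 2) ≠ 0 := by positivity
  push_cast
  rw [div_sub_div _ _ (by positivity) (by positivity), mul_one_div,
    div_eq_div_iff (by positivity) (by positivity)]
  ring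

lemma summable_sq_shift : Summable (fun n : ℕ => 1 / ((n : ℝ) + 1) ^ 2) := by
  have h : Summable (fun n : ℕ => 1 / (n : ℝ) ^ 2) :=
    Real.summable_one_div_nat_pow.mpr (by norm_num)
  have := (summable_nat_add_iff 1).mpr h
  simpa using this

lemma summable_inner (m : ℕ) :
    Summable (fun n : ℕ => 1 / (((n : ℝ) + 1) * ((n : ℝ) + (m : ℝ) + 2))) := by
  apply summable_sq_shift.of_nonneg_of_le (fun n => by positivity)
  intro n
  apply one_div_le_one_div_of_le
  · positivity
  · nlinarith [Nat.cast_nonneg (α := ℝ) n, Nat.cast_nonneg (α := ℝ) m]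

/-- The inner-sum evaluation. -/
lemma tsum_inner (m : ℕ) :
    ∑' n : ℕ, 1 / (((n : ℝ) + 1) * ((n : ℝ) + (m : ℝ) + 2))
      = (1 / ((m : ℝ) + 1)) * ∑ j ∈ range (m + 1), 1 / ((j : ℝ) + 1) := by
  set f : ℕ → ℝ := fun n => 1 / ((n : ℝ) + 1) with hf
  have hdiff : ∀ n : ℕ, f n - f (n + (m + 1)) =
      ((m : ℝ) + 1) * (1 / (((n : ℝ) + 1) * ((n : ℝ) + (m : ℝ) + 2))) := fun n => diff_eq m n
  have hs : Summable fun n => f n - f (n + (m + 1)) := by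
    rw [funext hdiff]
    exact (summable_inner m).mul_left _
  have ht := tsum_telescope f (m + 1) recip_tendsto hs
  rw [funext hdiff, tsum_mul_left] at ht
  have hm : ((m : ℝ) + 1) ≠ 0 := by positivity
  rw [← ht]
  field_simp

lemma F_fiber (d n : ℕ) : F (d, n)
    = (1 / ((d : ℝ) + 1)) * (1 / (((n : ℝ) + 1) * ((n : ℝ) + (d : ℝ) + 2))) := by
  unfold F
  have h1 : ((d:ℝ) + 1) ≠ 0 := by positivity
  have h2 : ((n:ℝ) + 1) ≠ 0 := by positivity
  have h3 : ((d:ℝ) + (n:ℝ) + 2) ≠ 0 := by positivity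
  field_simp
  ring

/-- Row sums of `F`. -/
lemma tsum_F_fiber (d : ℕ) :
    ∑' n : ℕ, F (d, n)
      = 1 / ((d : ℝ) + 1) ^ 3 + ∑ i ∈ range d, 1 / (((d : ℝ) + 1) ^ 2 * ((i : ℝ) + 1)) := by
  have h0 : ∑' n : ℕ, F (d, n)
      = (1 / ((d : ℝ) + 1)) * ∑' n : ℕ, 1 / (((n : ℝ) + 1) * ((n : ℝ) + (d : ℝ) + 2)) := by
    rw [← tsum_mul_left]
    exact tsum_congr fun n => F_fiber d n
  have hd : ((d:ℝ) + 1) ≠ 0 := by positivity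
  have hsum : ∑ i ∈ range d, 1 / (((d : ℝ) + 1) ^ 2 * ((i : ℝ) + 1))
      = 1 / ((d:ℝ) + 1) * (1 / ((d:ℝ) + 1) * ∑ i ∈ range d, 1 / ((i : ℝ) + 1)) := by
    rw [Finset.mul_sum, Finset.mul_sum]
    apply Finset.sum_congr rfl
    intro i _
    have hi : ((i:ℝ) + 1) ≠ 0 := by positivity
    field_simp
  rw [h0, tsum_inner d, Finset.sum_range_succ, hsum]
  field_simp
  ring

/-- Indicator function whose rows are the finite sums appearing in `tsum_F_fiber`. -/
noncomputable def G : ℕ × ℕ → ℝ :=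
  fun p => if p.2 < p.1 then 1 / (((p.1 : ℝ) + 1) ^ 2 * ((p.2 : ℝ) + 1)) else 0

def iota : ℕ × ℕ → ℕ × ℕ := fun q => (q.2 + q.1 + 1, q.2)

lemma iota_inj : Function.Injective iota := by
  intro a b h
  obtain ⟨d, j⟩ := a; obtain ⟨e, i⟩ := b
  simp only [iota, Prod.mk.injEq] at h
  obtain ⟨h1, h2⟩ := h
  subst h2
  exact Prod.ext (by omega) rfl

lemma G_comp_iota : G ∘ iota = T := by
  funext q
  obtain ⟨d, j⟩ := q
  simp only [Function.comp_apply, G, iota, T]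
  simp only [show j < j + d + 1 by omega, ↓reduceIte]
  push_cast
  ring_nf

lemma G_support : Function.support G ⊆ Set.range iota := by
  intro p hp
  obtain ⟨a, b⟩ := p
  simp only [Function.mem_support, G] at hp
  by_cases h : b < a
  · exact ⟨(a - b - 1, b), by simp only [iota]; exact Prod.ext (by omega) rfl⟩
  · exact absurd (if_neg h) hp

lemma G_zero_off_range : ∀ p ∉ Set.range iota, G p = 0 := by
  intro p hp
  by_contra h
  exact hp (G_support h)

lemma summable_G : Summable G :=
  (iota_inj.summable_iff G_zero_off_range).mp (G_comp_iota ▸ summable_T)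

lemma tsum_G : ∑' p : ℕ × ℕ, G p = ∑' p : ℕ × ℕ, T p := by
  rw [← iota_inj.tsum_eq G_support]
  exact tsum_congr fun q => congrFun G_comp_iota q

lemma G_fiber (d : ℕ) :
    ∑' i : ℕ, G (d, i) = ∑ i ∈ range d, 1 / (((d : ℝ) + 1) ^ 2 * ((i : ℝ) + 1)) := by
  rw [tsum_eq_sum (s := range d) (by
    intro i hi
    simp only [G]
    rw [if_neg (by simpa using hi)])]
  apply Finset.sum_congr rfl
  intro i hi
  simp only [G]
  rw [if_pos (by simpa using hi)]

lemma summable_cube : Summable (fun d : ℕ => 1 / ((d : ℝ) + 1) ^ 3) := by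
  have h : Summable (fun n : ℕ => 1 / (n : ℝ) ^ 3) :=
    Real.summable_one_div_nat_pow.mpr (by norm_num)
  have := (summable_nat_add_iff 1).mpr h
  simpa using this

lemma tsum_F_eq : ∑' p : ℕ × ℕ, F p = mzv1 3 + ∑' p : ℕ × ℕ, T p := by
  have hfib : ∀ b : ℕ, Summable fun n : ℕ => F (b, n) := fun b => summable_F.prod_factor b
  rw [Summable.tsum_prod' summable_F hfib]
  have hsum_fibers : Summable (fun d : ℕ => ∑' n : ℕ, F (d, n)) :=
    (summable_F.hasSum.prod_fiberwise fun b => (hfib b).hasSum).summable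
  have heq : (fun d : ℕ => ∑' n : ℕ, F (d, n))
      = fun d : ℕ => 1 / ((d : ℝ) + 1) ^ 3 + ∑' i : ℕ, G (d, i) := by
    funext d
    rw [tsum_F_fiber d, G_fiber d]
  have hGfib : Summable (fun d : ℕ => ∑' i : ℕ, G (d, i)) := by
    have h := hsum_fibers
    rw [heq] at h
    have h2 := h.sub summable_cube
    simpa using h2
  calc ∑' (d : ℕ), ∑' (n : ℕ), F (d, n)
      = ∑' d : ℕ, (1 / ((d : ℝ) + 1) ^ 3 + ∑' i : ℕ, G (d, i)) := by rw [← heq]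
    _ = (∑' d : ℕ, 1 / ((d : ℝ) + 1) ^ 3) + ∑' (d : ℕ), ∑' (i : ℕ), G (d, i) :=
        Summable.tsum_add summable_cube hGfib
    _ = mzv1 3 + ∑' p : ℕ × ℕ, G p := by
        rw [mzv1, Summable.tsum_prod' summable_G (fun b : ℕ => summable_G.prod_factor b)]
    _ = mzv1 3 + ∑' p : ℕ × ℕ, T p := by rw [tsum_G]

end Zeta21Aux

/-- The weight-three relation `ζ_{2,1} = ζ₃`. -/
theorem zeta_two_one_eq_zeta_three : mzv2 2 1 = mzv1 3 := by
  have h1 := Zeta21Aux.tsum_F_eq_two_mul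
  have h2 := Zeta21Aux.tsum_F_eq
  have h3 := Zeta21Aux.mzv2_eq_tsum_T
  rw [h3]
  linarith [h1, h2]
end

section
/- The shuffle relation at weight four holds: ζ₂² = 4 ζ_{3,1} + 2 ζ_{2,2}; that is, (∑_{n≥1} 1/n²)² = 4 ∑_{n₁>n₂≥1} 1/(n₁³ n₂) + 2 ∑_{n₁>n₂≥1} 1/(n₁² n₂²). -/
namespace ShuffleAux

/-- Reindexing bijection for depth-two MZVs. -/
def e : ℕ × ℕ ≃ {p : ℕ × ℕ // 1 ≤ p.2 ∧ p.2 < p.1} where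
  toFun q := ⟨(q.1 + q.2 + 2, q.2 + 1), by omega⟩
  invFun p := (p.1.1 - p.1.2 - 1, p.1.2 - 1)
  left_inv q := by
    obtain ⟨a, b⟩ := q
    simp only [Prod.mk.injEq]
    omega
  right_inv p := by
    obtain ⟨⟨a, b⟩, h⟩ := p
    simp only [Subtype.mk.injEq, Prod.mk.injEq]
    omega

/-- The summand of `mzv2 a b` after reindexing. -/
noncomputable def F (a b : ℕ) (q : ℕ × ℕ) : ℝ :=
  1 / (((q.1 : ℝ) + (q.2 : ℝ) + 2) ^ a * ((q.2 : ℝ) + 1) ^ b)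

lemma mzv2_eq (a b : ℕ) : mzv2 a b = ∑' q : ℕ × ℕ, F a b q := by
  rw [mzv2, ← e.tsum_eq]
  congr 1
  funext q
  simp only [e, Equiv.coe_fn_mk, F]
  push_cast
  ring_nf

lemma summable_f : Summable (fun n : ℕ => (1 : ℝ) / ((n : ℝ) + 1) ^ 2) := by
  have h : Summable (fun n : ℕ => (1 : ℝ) / (n : ℝ) ^ 2) :=
    Real.summable_one_div_nat_pow.mpr one_lt_two
  have := (summable_nat_add_iff 1).mpr h
  refine this.congr fun n => ?_
  push_cast
  ring_nf

/-- The base product function `1/((m+1)²(n+1)²)`. -/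
noncomputable def B (q : ℕ × ℕ) : ℝ :=
  1 / (((q.1 : ℝ) + 1) ^ 2 * ((q.2 : ℝ) + 1) ^ 2)

lemma summable_B : Summable B := by
  have := summable_f.mul_of_nonneg summable_f
    (fun n => by positivity) (fun n => by positivity)
  refine this.congr fun q => ?_
  simp only [B]
  rw [div_mul_div_comm, one_mul]

lemma F_nonneg (a b : ℕ) (q : ℕ × ℕ) : 0 ≤ F a b q := by
  unfold F; positivity

lemma F_le_B_31 (q : ℕ × ℕ) : F 3 1 q ≤ B q := by
  obtain ⟨m, n⟩ := q
  unfold F B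
  have hx : (0 : ℝ) < (m : ℝ) + 1 := by positivity
  have hy : (0 : ℝ) < (n : ℝ) + 1 := by positivity
  apply one_div_le_one_div_of_le (by positivity)
  have h1 : ((m : ℝ) + 1) ≤ (m : ℝ) + (n : ℝ) + 2 := by
    have : (0 : ℝ) ≤ (n : ℝ) := Nat.cast_nonneg n
    linarith
  have h2 : ((n : ℝ) + 1) ≤ (m : ℝ) + (n : ℝ) + 2 := by
    have : (0 : ℝ) ≤ (m : ℝ) := Nat.cast_nonneg m
    linarith
  calc ((m : ℝ) + 1) ^ 2 * ((n : ℝ) + 1) ^ 2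
      = (((m : ℝ) + 1) * ((m : ℝ) + 1) * ((n : ℝ) + 1)) * ((n : ℝ) + 1) ^ 1 := by ring
    _ ≤ (((m : ℝ) + (n : ℝ) + 2) * (((m : ℝ) + (n : ℝ) + 2)) * ((m : ℝ) + (n : ℝ) + 2))
          * ((n : ℝ) + 1) ^ 1 := by
        apply mul_le_mul_of_nonneg_right _ (by positivity)
        apply mul_le_mul (mul_le_mul h1 h1 hx.le (by positivity)) h2 hy.le (by positivity)
    _ = ((m : ℝ) + (n : ℝ) + 2) ^ 3 * ((n : ℝ) + 1) ^ 1 := by ring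

lemma F_le_B_22 (q : ℕ × ℕ) : F 2 2 q ≤ B q := by
  obtain ⟨m, n⟩ := q
  unfold F B
  apply one_div_le_one_div_of_le (by positivity)
  apply mul_le_mul_of_nonneg_right _ (by positivity)
  have h1 : ((m : ℝ) + 1) ≤ (m : ℝ) + (n : ℝ) + 2 := by
    have : (0 : ℝ) ≤ (n : ℝ) := Nat.cast_nonneg n
    linarith
  have hx : (0 : ℝ) ≤ (m : ℝ) + 1 := by positivity
  exact pow_le_pow_left₀ hx h1 2

lemma summable_F31 : Summable (F 3 1) :=
  Summable.of_nonneg_of_le (F_nonneg 3 1) F_le_B_31 summable_B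

lemma summable_F22 : Summable (F 2 2) :=
  Summable.of_nonneg_of_le (F_nonneg 2 2) F_le_B_22 summable_B

lemma summable_swap {g : ℕ × ℕ → ℝ} (hg : Summable g) :
    Summable (fun q : ℕ × ℕ => g (q.2, q.1)) := by
  have := (Equiv.prodComm ℕ ℕ).summable_iff.mpr hg
  exact this.congr fun q => rfl

lemma tsum_swap (g : ℕ × ℕ → ℝ) :
    ∑' q : ℕ × ℕ, g (q.2, q.1) = ∑' q : ℕ × ℕ, g q := by
  exact (Equiv.prodComm ℕ ℕ).tsum_eq g

lemma key' (m n : ℝ) (hm : 0 ≤ m) (hn : 0 ≤ n) :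
    1 / ((m + 1) ^ 2 * (n + 1) ^ 2) =
      1 / ((n + m + 2) ^ 2 * (m + 1) ^ 2) + 1 / ((m + n + 2) ^ 2 * (n + 1) ^ 2) +
        (2 * (1 / ((n + m + 2) ^ 3 * (m + 1))) + 2 * (1 / ((m + n + 2) ^ 3 * (n + 1)))) := by
  have hm1 : (0 : ℝ) < m + 1 := by linarith
  have hn1 : (0 : ℝ) < n + 1 := by linarith
  have hs : (0 : ℝ) < m + n + 2 := by linarith
  have hs' : (0 : ℝ) < n + m + 2 := by linarith
  field_simp
  ring

end ShuffleAux

set_option maxHeartbeats 1000000 in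
open ShuffleAux in
/-- The shuffle relation at weight four: `ζ₂² = 4 ζ_{3,1} + 2 ζ_{2,2}`. -/
theorem shuffle_weight_four : (mzv1 2) ^ 2 = 4 * mzv2 3 1 + 2 * mzv2 2 2 := by
  have hprod : Summable (fun q : ℕ × ℕ =>
      (1 : ℝ) / ((q.1 : ℝ) + 1) ^ 2 * ((1 : ℝ) / ((q.2 : ℝ) + 1) ^ 2)) := by
    refine summable_B.congr fun q => ?_
    simp only [B]
    rw [div_mul_div_comm, one_mul]
  have hB : (mzv1 2) ^ 2 = ∑' q : ℕ × ℕ, B q := by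
    rw [mzv1, sq, Summable.tsum_mul_tsum summable_f summable_f hprod]
    refine tsum_congr fun q => ?_
    simp only [B]
    rw [div_mul_div_comm, one_mul]
  have hptwise : ∀ q : ℕ × ℕ, B q =
      F 2 2 (q.2, q.1) + F 2 2 q + (2 * F 3 1 (q.2, q.1) + 2 * F 3 1 q) := by
    rintro ⟨m, n⟩
    simp only [B, F, pow_one]
    exact key' (m : ℝ) (n : ℝ) (Nat.cast_nonneg m) (Nat.cast_nonneg n)
  have hsum1 : Summable (fun q : ℕ × ℕ => F 2 2 (q.2, q.1)) := summable_swap summable_F22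
  have hsum3 : Summable (fun q : ℕ × ℕ => 2 * F 3 1 (q.2, q.1)) :=
    (summable_swap summable_F31).mul_left 2
  have hsum4 : Summable (fun q : ℕ × ℕ => 2 * F 3 1 q) := summable_F31.mul_left 2
  rw [hB, tsum_congr hptwise,
    Summable.tsum_add (hsum1.add summable_F22) (hsum3.add hsum4),
    Summable.tsum_add hsum1 summable_F22, Summable.tsum_add hsum3 hsum4,
    tsum_mul_left, tsum_mul_left,
    tsum_swap (F 2 2), tsum_swap (F 3 1),
    ← mzv2_eq, ← mzv2_eq]
  ring
end

section
/- The regularised shuffle relation at weight four holds: ζ₄ = ζ_{3,1} + ζ_{2,2}; that is, ∑_{n≥1} 1/n⁴ = ∑_{n₁>n₂≥1} 1/(n₁³ n₂) + ∑_{n₁>n₂≥1} 1/(n₁² n₂²). -/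
open Real

namespace RegShuffle4

/-! Auxiliary functions on shifted pairs: `(m, n) : ℕ × ℕ` stands for the positive
integers `m+1`, `n+1` (and `m+n+2 = (m+1) + (n+1)`). -/

noncomputable def F2 (q : ℕ × ℕ) : ℝ := 1 / (((q.1 : ℝ) + 1) ^ 2 * ((q.2 : ℝ) + 1) ^ 2)

noncomputable def G (q : ℕ × ℕ) : ℝ :=
  1 / (((q.1 : ℝ) + 1) ^ 2 * ((q.1 : ℝ) + (q.2 : ℝ) + 2) ^ 2)

noncomputable def H (q : ℕ × ℕ) : ℝ :=
  1 / (((q.1 : ℝ) + 1) * ((q.2 : ℝ) + 1) * ((q.1 : ℝ) + (q.2 : ℝ) + 2) ^ 2)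

noncomputable def K (q : ℕ × ℕ) : ℝ :=
  1 / (((q.1 : ℝ) + 1) * ((q.1 : ℝ) + (q.2 : ℝ) + 2) ^ 3)

lemma summable_sq : Summable (fun n : ℕ => (1 : ℝ) / ((n : ℝ) + 1) ^ 2) := by
  have h := (summable_nat_add_iff 1).2 (summable_one_div_nat_pow.2 one_lt_two)
  refine h.congr fun n => ?_
  push_cast
  ring_nf

lemma summable_F2 : Summable F2 := by
  have h := summable_sq.mul_of_nonneg summable_sq
    (fun n => by positivity) (fun n => by positivity)
  refine h.congr fun q => ?_
  simp only [F2]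
  rw [div_mul_div_comm, one_mul]

lemma summable_of_le_F2 {f : ℕ × ℕ → ℝ} (h0 : ∀ q, 0 ≤ f q) (h : ∀ q, f q ≤ F2 q) :
    Summable f :=
  Summable.of_nonneg_of_le h0 h summable_F2

lemma cast_nonneg' (n : ℕ) : (0 : ℝ) ≤ (n : ℝ) := Nat.cast_nonneg n

lemma summable_G : Summable G := by
  refine summable_of_le_F2 (fun q => by simp only [G, H, K]; positivity) (fun q => ?_)
  have ha := cast_nonneg' q.1
  have hb := cast_nonneg' q.2
  have hle : ((q.1 : ℝ) + 1) ^ 2 * ((q.2 : ℝ) + 1) ^ 2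
      ≤ ((q.1 : ℝ) + 1) ^ 2 * ((q.1 : ℝ) + (q.2 : ℝ) + 2) ^ 2 := by
    have h2 : ((q.2 : ℝ) + 1) ^ 2 ≤ ((q.1 : ℝ) + (q.2 : ℝ) + 2) ^ 2 :=
      pow_le_pow_left₀ (by positivity) (by linarith) 2
    exact mul_le_mul_of_nonneg_left h2 (by positivity)
  simp only [G, H, K, F2]
  exact one_div_le_one_div_of_le (by positivity) hle

lemma summable_H : Summable H := by
  refine summable_of_le_F2 (fun q => by simp only [G, H, K]; positivity) (fun q => ?_)
  have ha := cast_nonneg' q.1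
  have hb := cast_nonneg' q.2
  have h1 : ((q.1 : ℝ) + 1) * ((q.2 : ℝ) + 1) ≤ ((q.1 : ℝ) + (q.2 : ℝ) + 2) ^ 2 := by
    nlinarith [sq_nonneg ((q.1 : ℝ) - (q.2 : ℝ)), mul_nonneg ha hb]
  have hle : ((q.1 : ℝ) + 1) ^ 2 * ((q.2 : ℝ) + 1) ^ 2
      ≤ ((q.1 : ℝ) + 1) * ((q.2 : ℝ) + 1) * ((q.1 : ℝ) + (q.2 : ℝ) + 2) ^ 2 := by
    calc ((q.1 : ℝ) + 1) ^ 2 * ((q.2 : ℝ) + 1) ^ 2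
        = ((q.1 : ℝ) + 1) * ((q.2 : ℝ) + 1) * (((q.1 : ℝ) + 1) * ((q.2 : ℝ) + 1)) := by ring
      _ ≤ ((q.1 : ℝ) + 1) * ((q.2 : ℝ) + 1) * ((q.1 : ℝ) + (q.2 : ℝ) + 2) ^ 2 :=
          mul_le_mul_of_nonneg_left h1 (by positivity)
  simp only [G, H, K, F2]
  exact one_div_le_one_div_of_le (by positivity) hle

lemma summable_K : Summable K := by
  refine summable_of_le_F2 (fun q => by simp only [G, H, K]; positivity) (fun q => ?_)
  have ha := cast_nonneg' q.1
  have hb := cast_nonneg' q.2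
  have h1 : ((q.1 : ℝ) + 1) * ((q.2 : ℝ) + 1) ^ 2
      ≤ ((q.1 : ℝ) + (q.2 : ℝ) + 2) * ((q.1 : ℝ) + (q.2 : ℝ) + 2) ^ 2 :=
    mul_le_mul (by linarith) (pow_le_pow_left₀ (by positivity) (by linarith) 2)
      (by positivity) (by positivity)
  have hle : ((q.1 : ℝ) + 1) ^ 2 * ((q.2 : ℝ) + 1) ^ 2
      ≤ ((q.1 : ℝ) + 1) * ((q.1 : ℝ) + (q.2 : ℝ) + 2) ^ 3 := by
    calc ((q.1 : ℝ) + 1) ^ 2 * ((q.2 : ℝ) + 1) ^ 2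
        = ((q.1 : ℝ) + 1) * (((q.1 : ℝ) + 1) * ((q.2 : ℝ) + 1) ^ 2) := by ring
      _ ≤ ((q.1 : ℝ) + 1) * (((q.1 : ℝ) + (q.2 : ℝ) + 2) * ((q.1 : ℝ) + (q.2 : ℝ) + 2) ^ 2) :=
          mul_le_mul_of_nonneg_left h1 (by positivity)
      _ = ((q.1 : ℝ) + 1) * ((q.1 : ℝ) + (q.2 : ℝ) + 2) ^ 3 := by ring
  simp only [G, H, K, F2]
  exact one_div_le_one_div_of_le (by positivity) hle

/-- The reindexing equivalence for depth-two MZV sums. -/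
def e2 : ℕ × ℕ ≃ {p : ℕ × ℕ // 1 ≤ p.2 ∧ p.2 < p.1} where
  toFun q := ⟨(q.1 + q.2 + 2, q.1 + 1), by omega⟩
  invFun p := (p.1.2 - 1, p.1.1 - p.1.2 - 1)
  left_inv q := by
    obtain ⟨a, b⟩ := q
    first
      | (simp; omega)
      | simp
  right_inv p := by
    obtain ⟨⟨a, b⟩, h⟩ := p
    obtain ⟨h1, h2⟩ := h
    first
      | (simp; omega)
      | simp

lemma mzv2_eq (a b : ℕ) :
    mzv2 a b = ∑' q : ℕ × ℕ,
      (1 : ℝ) / (((q.1 : ℝ) + (q.2 : ℝ) + 2) ^ a * ((q.1 : ℝ) + 1) ^ b) := by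
  rw [mzv2, ← e2.tsum_eq]
  refine tsum_congr fun q => ?_
  simp only [e2, Equiv.coe_fn_mk]
  push_cast
  ring_nf

lemma mzv2_22 : mzv2 2 2 = ∑' q, G q := by
  rw [mzv2_eq]
  exact tsum_congr fun q => by rw [G, mul_comm]

lemma mzv2_31 : mzv2 3 1 = ∑' q, K q := by
  rw [mzv2_eq]
  exact tsum_congr fun q => by rw [K, mul_comm, pow_one]

/-- equivalence onto the diagonal -/
def ediag : ℕ ≃ {p : ℕ × ℕ // p ∈ {p : ℕ × ℕ | p.1 = p.2}} where
  toFun n := ⟨(n, n), rfl⟩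
  invFun p := p.1.1
  left_inv n := rfl
  right_inv p := by
    obtain ⟨⟨a, b⟩, h⟩ := p
    simp only [Set.mem_setOf_eq] at h
    simp [h]

/-- equivalence onto the strictly lower part -/
def elow : ℕ × ℕ ≃ {p : ℕ × ℕ // p ∈ {p : ℕ × ℕ | p.2 < p.1}} where
  toFun q := ⟨(q.1 + q.2 + 1, q.1), by simp only [Set.mem_setOf_eq]; omega⟩
  invFun p := (p.1.2, p.1.1 - p.1.2 - 1)
  left_inv q := by
    obtain ⟨a, b⟩ := q
    first
      | (simp; omega)
      | simp
  right_inv p := by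
    obtain ⟨⟨a, b⟩, h⟩ := p
    simp only [Set.mem_setOf_eq] at h
    first
      | (simp; omega)
      | simp

/-- equivalence onto the strictly upper part -/
def ehigh : ℕ × ℕ ≃ {p : ℕ × ℕ // p ∈ {p : ℕ × ℕ | p.1 < p.2}} where
  toFun q := ⟨(q.1, q.1 + q.2 + 1), by simp only [Set.mem_setOf_eq]; omega⟩
  invFun p := (p.1.1, p.1.2 - p.1.1 - 1)
  left_inv q := by
    obtain ⟨a, b⟩ := q
    first
      | (simp; omega)
      | simp
  right_inv p := by
    obtain ⟨⟨a, b⟩, h⟩ := p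
    simp only [Set.mem_setOf_eq] at h
    first
      | (simp; omega)
      | simp

lemma tsum_diag : ∑' x : {p : ℕ × ℕ | p.1 = p.2}, F2 x = mzv1 4 := by
  rw [← ediag.tsum_eq, mzv1]
  refine tsum_congr fun n => ?_
  simp only [ediag, Equiv.coe_fn_mk, F2]
  ring_nf

lemma tsum_low : ∑' x : {p : ℕ × ℕ | p.2 < p.1}, F2 x = ∑' q, G q := by
  rw [← elow.tsum_eq]
  refine tsum_congr fun q => ?_
  simp only [elow, Equiv.coe_fn_mk, F2, G]
  push_cast
  ring_nf

lemma tsum_high : ∑' x : {p : ℕ × ℕ | p.1 < p.2}, F2 x = ∑' q, G q := by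
  rw [← ehigh.tsum_eq]
  refine tsum_congr fun q => ?_
  simp only [ehigh, Equiv.coe_fn_mk, F2, G]
  push_cast
  ring_nf

/-- The stuffle relation `ζ(2)² = ζ(4) + 2 ζ(2,2)` (in raw form). -/
lemma stuffle : ∑' q, F2 q = mzv1 4 + 2 * ∑' q, G q := by
  classical
  set s : Set (ℕ × ℕ) := {p : ℕ × ℕ | p.1 = p.2} with hs
  have h1 : (∑' x : s, F2 x) + ∑' x : ↑sᶜ, F2 x = ∑' q, F2 q :=
    Summable.tsum_add_tsum_compl (summable_F2.subtype s) (summable_F2.subtype sᶜ)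
  have hcompl : sᶜ = {p : ℕ × ℕ | p.2 < p.1} ∪ {p : ℕ × ℕ | p.1 < p.2} := by
    ext p
    simp only [hs, Set.mem_compl_iff, Set.mem_setOf_eq, Set.mem_union]
    omega
  have hdisj : Disjoint {p : ℕ × ℕ | p.2 < p.1} {p : ℕ × ℕ | p.1 < p.2} := by
    rw [Set.disjoint_left]
    intro p hp hp'
    simp only [Set.mem_setOf_eq] at hp hp'
    omega
  have h2 : ∑' x : ↑sᶜ, F2 x = (∑' x : {p : ℕ × ℕ | p.2 < p.1}, F2 x)
      + ∑' x : {p : ℕ × ℕ | p.1 < p.2}, F2 x := by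
    rw [hcompl]
    exact Summable.tsum_union_disjoint hdisj (summable_F2.subtype _) (summable_F2.subtype _)
  rw [h2, tsum_diag, tsum_low, tsum_high] at h1
  linarith

lemma pf1 (q : ℕ × ℕ) : F2 q = G q + G q.swap + 2 * H q := by
  obtain ⟨m, n⟩ := q
  have hm : (0 : ℝ) < (m : ℝ) + 1 := by positivity
  have hn : (0 : ℝ) < (n : ℝ) + 1 := by positivity
  have hmn : (0 : ℝ) < (m : ℝ) + (n : ℝ) + 2 := by positivity
  simp only [F2, G, H, Prod.swap]
  field_simp
  ring

lemma pf2 (q : ℕ × ℕ) : H q = K q + K q.swap := by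
  obtain ⟨m, n⟩ := q
  have hm : (0 : ℝ) < (m : ℝ) + 1 := by positivity
  have hn : (0 : ℝ) < (n : ℝ) + 1 := by positivity
  have hmn : (0 : ℝ) < (m : ℝ) + (n : ℝ) + 2 := by positivity
  simp only [H, K, Prod.swap]
  field_simp
  ring

lemma tsum_swap_G : ∑' q : ℕ × ℕ, G q.swap = ∑' q, G q := by
  rw [← (Equiv.prodComm ℕ ℕ).tsum_eq G]
  rfl

lemma tsum_swap_K : ∑' q : ℕ × ℕ, K q.swap = ∑' q, K q := by
  rw [← (Equiv.prodComm ℕ ℕ).tsum_eq K]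
  rfl

lemma summable_G_swap : Summable (fun q : ℕ × ℕ => G q.swap) :=
  ((Equiv.prodComm ℕ ℕ).summable_iff (f := G)).2 summable_G

lemma summable_K_swap : Summable (fun q : ℕ × ℕ => K q.swap) :=
  ((Equiv.prodComm ℕ ℕ).summable_iff (f := K)).2 summable_K

/-- The shuffle relation in raw form: `∑ F2 = 2 ∑ G + 4 ∑ K`. -/
lemma shuffle : ∑' q, F2 q = 2 * (∑' q, G q) + 4 * ∑' q, K q := by
  have hH : ∑' q, H q = 2 * ∑' q, K q := by
    calc ∑' q, H q = ∑' q : ℕ × ℕ, (K q + K q.swap) := tsum_congr pf2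
    _ = (∑' q, K q) + ∑' q : ℕ × ℕ, K q.swap := Summable.tsum_add summable_K summable_K_swap
    _ = 2 * ∑' q, K q := by rw [tsum_swap_K]; ring
  calc ∑' q, F2 q = ∑' q : ℕ × ℕ, (G q + G q.swap + 2 * H q) := tsum_congr pf1
    _ = (∑' q : ℕ × ℕ, (G q + G q.swap)) + ∑' q, 2 * H q :=
        Summable.tsum_add (summable_G.add summable_G_swap) (summable_H.mul_left 2)
    _ = ((∑' q, G q) + ∑' q : ℕ × ℕ, G q.swap) + 2 * ∑' q, H q := by
        rw [Summable.tsum_add summable_G summable_G_swap, tsum_mul_left]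
    _ = 2 * (∑' q, G q) + 4 * ∑' q, K q := by rw [tsum_swap_G, hH]; ring

lemma mzv1_two : mzv1 2 = π ^ 2 / 6 := by
  have h := hasSum_zeta_two
  have h0 := Summable.tsum_eq_zero_add h.summable
  rw [h.tsum_eq] at h0
  simp only [Nat.cast_zero, Nat.cast_add, Nat.cast_one] at h0
  norm_num at h0
  rw [mzv1]
  simp only [one_div]
  exact h0.symm

lemma mzv1_four : mzv1 4 = π ^ 4 / 90 := by
  have h := hasSum_zeta_four
  have h0 := Summable.tsum_eq_zero_add h.summable
  rw [h.tsum_eq] at h0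
  simp only [Nat.cast_zero, Nat.cast_add, Nat.cast_one] at h0
  norm_num at h0
  rw [mzv1]
  simp only [one_div]
  exact h0.symm

lemma tsum_F2_eq : ∑' q, F2 q = π ^ 4 / 36 := by
  have hnorm : Summable fun n : ℕ => ‖(1 : ℝ) / ((n : ℝ) + 1) ^ 2‖ := by
    refine summable_sq.congr fun n => ?_
    rw [Real.norm_eq_abs, abs_of_nonneg (by positivity)]
  have h := tsum_mul_tsum_of_summable_norm hnorm hnorm
  have h2 : ∑' q : ℕ × ℕ, (1 : ℝ) / ((q.1 : ℝ) + 1) ^ 2 * (1 / ((q.2 : ℝ) + 1) ^ 2)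
      = ∑' q, F2 q := by
    refine tsum_congr fun q => ?_
    rw [F2, div_mul_div_comm, one_mul]
  rw [h2] at h
  have hz : (∑' n : ℕ, (1 : ℝ) / ((n : ℝ) + 1) ^ 2) = π ^ 2 / 6 := mzv1_two
  rw [hz] at h
  rw [← h]
  ring

end RegShuffle4

/-- The regularised shuffle relation at weight four: `ζ₄ = ζ_{3,1} + ζ_{2,2}`. -/
theorem reg_shuffle_weight_four : mzv1 4 = mzv2 3 1 + mzv2 2 2 := by
  have h1 := RegShuffle4.stuffle
  have h2 := RegShuffle4.shuffle
  have h3 := RegShuffle4.tsum_F2_eq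
  have h4 := RegShuffle4.mzv1_four
  rw [RegShuffle4.mzv2_22, RegShuffle4.mzv2_31]
  have hpi : (π : ℝ) ^ 4 / 36 = (π ^ 4 / 90) + 2 * ∑' q, RegShuffle4.G q := by
    rw [← h4, ← h3, h1]
  linarith [h1, h2, h3, h4]
end

section
/- Let x, y be real numbers with 0 < x, 0 < y and x + y < 1. Then the five-term relation for the dilogarithm holds: Li₂(x/(1−y)) + Li₂(y/(1−x)) − Li₂(xy/((1−x)(1−y))) = Li₂(x) + Li₂(y) + log(1−x)·log(1−y). -/
/-- The dilogarithm `Li₂(x) = ∑_{n ≥ 1} x^n / n²`, defined by its series. -/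
noncomputable def Li₂ (x : ℝ) : ℝ := ∑' n : ℕ, x ^ (n + 1) / ((n : ℝ) + 1) ^ 2

noncomputable def Li₂' (t : ℝ) : ℝ := ∑' n : ℕ, t ^ n / ((n : ℝ) + 1)

lemma Li₂_zero : Li₂ 0 = 0 := by
  simp [Li₂]

lemma Li₂'_zero : Li₂' 0 = 1 := by
  rw [Li₂', tsum_eq_single 0]
  · simp
  · intro n hn
    simp [zero_pow hn]

lemma hasDerivAt_Li₂ {t : ℝ} (ht : |t| < 1) : HasDerivAt Li₂ (Li₂' t) t := by
  set r : ℝ := (|t| + 1) / 2 with hr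
  have hr0 : 0 ≤ r := by positivity
  have htr : |t| < r := by rw [hr]; linarith
  have hr1 : r < 1 := by rw [hr]; linarith
  have key : HasDerivAt (fun z => ∑' n : ℕ, z ^ (n + 1) / ((n : ℝ) + 1) ^ 2)
      (∑' n : ℕ, t ^ n / ((n : ℝ) + 1)) t := by
    refine hasDerivAt_tsum_of_isPreconnected (u := fun n : ℕ => r ^ n)
      (g' := fun (n : ℕ) (y : ℝ) => y ^ n / ((n : ℝ) + 1)) (y₀ := 0)
      (summable_geometric_of_lt_one hr0 hr1) Metric.isOpen_ball
      ((convex_ball (0:ℝ) r).isPreconnected) ?_ ?_ ?_ ?_ ?_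
    · intro n y _
      have h1 : HasDerivAt (fun z : ℝ => z ^ (n + 1)) ((n + 1 : ℕ) * y ^ n) y := by
        simpa using hasDerivAt_pow (n + 1) y
      have := h1.div_const (((n : ℝ) + 1) ^ 2)
      convert this using 1
      · rfl
      have hn : ((n : ℝ) + 1) ≠ 0 := by positivity
      push_cast
      field_simp
    · intro n y hy
      rw [Metric.mem_ball, dist_zero_right, Real.norm_eq_abs] at hy
      have h1 : |y ^ n / ((n : ℝ) + 1)| ≤ |y| ^ n := by
        rw [abs_div, abs_pow]
        have hn : (1 : ℝ) ≤ |(n : ℝ) + 1| := by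
          rw [abs_of_pos (by positivity)]; linarith [Nat.cast_nonneg (α := ℝ) n]
        calc |y| ^ n / |(n : ℝ) + 1| ≤ |y| ^ n / 1 :=
              div_le_div_of_nonneg_left (by positivity) one_pos hn
          _ = |y| ^ n := div_one _
      calc ‖y ^ n / ((n : ℝ) + 1)‖ ≤ |y| ^ n := h1
        _ ≤ r ^ n := pow_le_pow_left₀ (abs_nonneg _) hy.le n
    · simp only [Metric.mem_ball, dist_self]; linarith [abs_nonneg t]
    · simpa using (summable_zero : Summable fun _ : ℕ => (0:ℝ))
    · simpa [Metric.mem_ball, Real.dist_eq] using htr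
  exact key

lemma Li₂'_eq {t : ℝ} (ht : |t| < 1) (ht0 : t ≠ 0) :
    Li₂' t = -Real.log (1 - t) / t := by
  have h1 := Real.hasSum_pow_div_log_of_abs_lt_one ht
  have h2 := h1.div_const t
  have he : (fun n : ℕ => t ^ (n + 1) / (n + 1) / t) = fun n : ℕ => t ^ n / ((n : ℝ) + 1) := by
    funext n
    have hn : ((n : ℝ) + 1) ≠ 0 := by positivity
    rw [pow_succ]
    field_simp
  rw [he] at h2
  exact h2.tsum_eq


/-- The five-term relation for the dilogarithm: for `0 < x`, `0 < y` with `x + y < 1`,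
`Li₂(x/(1−y)) + Li₂(y/(1−x)) − Li₂(xy/((1−x)(1−y)))
  = Li₂(x) + Li₂(y) + log(1−x)·log(1−y)`. -/
theorem dilog_five_term (x y : ℝ) (hx : 0 < x) (hy : 0 < y) (hxy : x + y < 1) :
    Li₂ (x / (1 - y)) + Li₂ (y / (1 - x)) - Li₂ (x * y / ((1 - x) * (1 - y))) =
      Li₂ x + Li₂ y + Real.log (1 - x) * Real.log (1 - y) := by
  have hx1 : x < 1 := by linarith
  have h1x : 0 < 1 - x := by linarith
  set F : ℝ → ℝ := fun t => Li₂ (x / (1 - t)) + Li₂ (t / (1 - x)) -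
    Li₂ (x * t / ((1 - x) * (1 - t))) - Li₂ x - Li₂ t -
    Real.log (1 - x) * Real.log (1 - t) with hF
  have key : ∀ t ∈ Set.Icc (0:ℝ) y, HasDerivAt F 0 t := by
    intro t ht
    obtain ⟨ht0, hty⟩ := ht
    have h1t : 0 < 1 - t := by linarith
    have hxt : 0 < 1 - x - t := by linarith
    -- inner functions and their derivatives
    have hden : HasDerivAt (fun s : ℝ => 1 - s) (-1) t := by
      simpa using (hasDerivAt_id t).const_sub 1
    have hA : HasDerivAt (fun s : ℝ => x / (1 - s))
        ((0 * (1 - t) - x * (-1)) / (1 - t) ^ 2) t :=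
      (hasDerivAt_const t x).div hden h1t.ne'
    have hB : HasDerivAt (fun s : ℝ => s / (1 - x)) (1 / (1 - x)) t := by
      simpa using (hasDerivAt_id t).div_const (1 - x)
    have hnum : HasDerivAt (fun s : ℝ => x * s) x t := by
      simpa using (hasDerivAt_id t).const_mul x
    have hden2 : HasDerivAt (fun s : ℝ => (1 - x) * (1 - s)) (-(1 - x)) t := by
      have := hden.const_mul (1 - x)
      simpa using this
    have hden2ne : (1 - x) * (1 - t) ≠ 0 := by positivity
    have hC : HasDerivAt (fun s : ℝ => x * s / ((1 - x) * (1 - s)))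
        ((x * ((1 - x) * (1 - t)) - x * t * -(1 - x)) / ((1 - x) * (1 - t)) ^ 2) t :=
      hnum.div hden2 hden2ne
    -- arguments are in (-1, 1)
    have hAmem : |x / (1 - t)| < 1 := by
      rw [abs_of_pos (by positivity)]
      rw [div_lt_one h1t]; linarith
    have hBmem : |t / (1 - x)| < 1 := by
      rw [abs_of_nonneg (by positivity)]
      rw [div_lt_one h1x]; linarith
    have hCmem : |x * t / ((1 - x) * (1 - t))| < 1 := by
      rw [abs_of_nonneg (by positivity)]
      rw [div_lt_one (by positivity)]; nlinarith
    have htmem : |t| < 1 := by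
      rw [abs_of_nonneg ht0]; linarith
    have hlog : HasDerivAt (fun s : ℝ => Real.log (1 - s)) ((1 - t)⁻¹ * -1) t :=
      (Real.hasDerivAt_log h1t.ne').comp t hden
    have c1 := (hasDerivAt_Li₂ hAmem).comp t hA
    have c2 := (hasDerivAt_Li₂ hBmem).comp t hB
    have c3 := (hasDerivAt_Li₂ hCmem).comp t hC
    have c4 := hasDerivAt_Li₂ htmem
    have hT := ((((c1.add c2).sub c3).sub_const (Li₂ x)).sub c4).sub
      (hlog.const_mul (Real.log (1 - x)))
    have hD : Li₂' (x / (1 - t)) * ((0 * (1 - t) - x * (-1)) / (1 - t) ^ 2) +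
        Li₂' (t / (1 - x)) * (1 / (1 - x)) -
        Li₂' (x * t / ((1 - x) * (1 - t))) *
          ((x * ((1 - x) * (1 - t)) - x * t * -(1 - x)) / ((1 - x) * (1 - t)) ^ 2) -
        Li₂' t - Real.log (1 - x) * ((1 - t)⁻¹ * -1) = 0 := by
      rcases eq_or_lt_of_le ht0 with h | h
      · rw [← h]
        norm_num [Li₂'_zero]
        rw [Li₂'_eq (by rw [abs_of_pos hx]; exact hx1) hx.ne']
        field_simp
        ring
      · have hAne : x / (1 - t) ≠ 0 := by positivity
        have hBne : t / (1 - x) ≠ 0 := by positivity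
        have hCne : x * t / ((1 - x) * (1 - t)) ≠ 0 := by positivity
        rw [Li₂'_eq hAmem hAne, Li₂'_eq hBmem hBne, Li₂'_eq hCmem hCne,
          Li₂'_eq htmem h.ne']
        have l1 : Real.log (1 - x / (1 - t)) =
            Real.log (1 - x - t) - Real.log (1 - t) := by
          rw [show 1 - x / (1 - t) = (1 - x - t) / (1 - t) by field_simp; ring,
            Real.log_div hxt.ne' h1t.ne']
        have l2 : Real.log (1 - t / (1 - x)) =
            Real.log (1 - x - t) - Real.log (1 - x) := by
          rw [show 1 - t / (1 - x) = (1 - x - t) / (1 - x) by field_simp,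
            Real.log_div hxt.ne' h1x.ne']
        have l3 : Real.log (1 - x * t / ((1 - x) * (1 - t))) =
            Real.log (1 - x - t) - Real.log (1 - x) - Real.log (1 - t) := by
          rw [show 1 - x * t / ((1 - x) * (1 - t)) = (1 - x - t) / ((1 - x) * (1 - t)) by
              field_simp; ring,
            Real.log_div hxt.ne' hden2ne, Real.log_mul h1x.ne' h1t.ne']
          ring
        rw [l1, l2, l3]
        field_simp
        ring
    rw [hD] at hT
    exact hT
  have hcont : ContinuousOn F (Set.Icc 0 y) := fun t ht =>
    (key t ht).continuousAt.continuousWithinAt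
  have hconst := constant_of_has_deriv_right_zero hcont
    (fun t ht => (key t (Set.Ico_subset_Icc_self ht)).hasDerivWithinAt)
  have hFy : F y = F 0 := hconst y ⟨hy.le, le_refl y⟩
  have hF0 : F 0 = 0 := by
    simp [hF, Li₂_zero]
  rw [hF0] at hFy
  simp only [hF] at hFy
  linarith
end
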